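/- Let 0 < m < M, let s ∈ (0,1), and let A_j, B_j (1 ≤ j ≤ n) be positive invertible bounded operators on a complex Hilbert space with m A_j ≤ B_j ≤ M A_j for all j. Then (s^s (M − m)(M m^s − m M^s)^{s−1} / ((1 − s)^{s−1} (M^s − m^s)^s)) · [(Σ_{j=1}^n A_j ♯_s B_j) ♯ (Σ_{j=1}^n A_j ♯_{1−s} B_j)] ≥ (Σ_{j=1}^n A_j) ♯ (Σ_{j=1}^n B_j). -/

import Mathlib

/-!
Put `P = ∑ Aⱼ`, `Q = ∑ Bⱼ` and `X = P^{-1/2} Q P^{-1/2}`, so that `m P ≤ Q ≤ M P` puts the spectrum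
of `X` in `[m, M]`. By concavity, `t ↦ t^u` lies above its chord `α_u t + β_u` on `[m, M]`; by
functional calculus, `Aⱼ ♯_u Bⱼ ≥ α_u Bⱼ + β_u Aⱼ`, and summing, the two sums in the claim dominate
`α_s Q + β_s P` and `α_{1-s} Q + β_{1-s} P`. Weighted AM-GM gives `c t^u ≤ α_u t + β_u` with the
same Young constant `c` for `u = s` and `u = 1 - s`; multiplying the two bounds yields
`√t ≤ c⁻¹ √((α_s t + β_s)(α_{1-s} t + β_{1-s}))` on `[m, M]`, and `c⁻¹` is the constant of the
theorem. Functional calculus in `X`, congruence invariance of `♯` under `P^{1/2}` and monotonicity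
of `♯` lift this to the operator inequality. All properties of `♯` used come from its
characterisation as the unique positive solution of the Riccati equation `X A⁻¹ X = B`.
-/

variable {H : Type*} [NormedAddCommGroup H] [InnerProductSpace ℂ H] [CompleteSpace H]

/-- Real power `A^r` of a bounded operator, via the continuous functional calculus. -/
noncomputable def opRpow (A : H →L[ℂ] H) (r : ℝ) : H →L[ℂ] H :=
  cfc (fun x : ℝ => x ^ r) A

/-- The weighted operator geometric mean
`A ♯_μ B = A^{1/2} (A^{-1/2} B A^{-1/2})^μ A^{1/2}`. -/
noncomputable def wgm (μ : ℝ) (A B : H →L[ℂ] H) : H →L[ℂ] H :=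
  opRpow A (1/2) * opRpow (opRpow A (-(1/2)) * B * opRpow A (-(1/2))) μ * opRpow A (1/2)

/-- The operator geometric mean `A ♯ B`. -/
noncomputable def geomMean (A B : H →L[ℂ] H) : H →L[ℂ] H := wgm (1/2) A B

/-- The operator arithmetic mean `A ∇ B = (A + B)/2`. -/
noncomputable def arithMean (A B : H →L[ℂ] H) : H →L[ℂ] H := ((1 : ℝ)/2) • (A + B)

/-- The operator harmonic mean `A ! B = ((A⁻¹ + B⁻¹)/2)⁻¹`. -/
noncomputable def harmMean (A B : H →L[ℂ] H) : H →L[ℂ] H :=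
  Ring.inverse (((1 : ℝ)/2) • (Ring.inverse A + Ring.inverse B))

noncomputable def rpowChordSlope (m M u : ℝ) : ℝ := (M ^ u - m ^ u) / (M - m)

noncomputable def rpowChordIntercept (m M u : ℝ) : ℝ := (M * m ^ u - m * M ^ u) / (M - m)

noncomputable def youngConst (α β u : ℝ) : ℝ := (α / u) ^ u * (β / (1 - u)) ^ (1 - u)

section Scalar

open Real

variable {m M s t u : ℝ}

lemma one_sub_mem_Ioo_zero_one (hu : u ∈ Set.Ioo 0 1) : 1 - u ∈ Set.Ioo 0 1 :=
  ⟨sub_pos.mpr hu.2, sub_lt_self 1 hu.1⟩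

lemma rpowChord_le_rpow (hm : 0 ≤ m) (hmM : m < M) (hu : u ∈ Set.Icc 0 1)
    (ht : t ∈ Set.Icc m M) : rpowChordSlope m M u * t + rpowChordIntercept m M u ≤ t ^ u := by
  have hMm : 0 < M - m := sub_pos.mpr hmM
  have hconc := (concaveOn_rpow hu.1 hu.2).2 (Set.mem_Ici.mpr hm)
    (Set.mem_Ici.mpr (hm.trans hmM.le)) (div_nonneg (sub_nonneg.mpr ht.2) hMm.le)
    (div_nonneg (sub_nonneg.mpr ht.1) hMm.le) (by field_simp; ring)
  have hpoint : (M - t) / (M - m) * m + (t - m) / (M - m) * M = t := by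
    field_simp; ring
  simp only [smul_eq_mul, hpoint] at hconc
  calc rpowChordSlope m M u * t + rpowChordIntercept m M u
      = (M - t) / (M - m) * m ^ u + (t - m) / (M - m) * M ^ u := by
        simp only [rpowChordSlope, rpowChordIntercept]; field_simp; ring
    _ ≤ t ^ u := hconc

lemma rpowChordSlope_pos (hm : 0 ≤ m) (hmM : m < M) (hu : 0 < u) : 0 < rpowChordSlope m M u :=
  div_pos (sub_pos.mpr (rpow_lt_rpow hm hmM hu)) (sub_pos.mpr hmM)

lemma rpowChordIntercept_eq (hm : 0 ≤ m) (hmM : m < M) :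
    rpowChordIntercept m M u = (m * M) ^ u * rpowChordSlope m M (1 - u) := by
  have hM : 0 < M := hm.trans_lt hmM
  have hMu : M ^ u * M ^ (1 - u) = M := by rw [← rpow_add hM]; simp
  have hmu : m ^ u * m ^ (1 - u) = m := by rw [← rpow_add' hm (by norm_num)]; simp
  rw [rpowChordIntercept, rpowChordSlope, mul_rpow hm hM.le, mul_div_assoc']
  congr 1
  calc M * m ^ u - m * M ^ u = m ^ u * (M ^ u * M ^ (1 - u)) - M ^ u * (m ^ u * m ^ (1 - u)) := by
        rw [hMu, hmu]; ring
    _ = m ^ u * M ^ u * (M ^ (1 - u) - m ^ (1 - u)) := by ring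

lemma rpowChordIntercept_pos (hm : 0 < m) (hmM : m < M) (hu : u < 1) :
    0 < rpowChordIntercept m M u := by
  rw [rpowChordIntercept_eq hm.le hmM]
  exact mul_pos (rpow_pos_of_pos (mul_pos hm (hm.trans hmM)) u)
    (rpowChordSlope_pos hm.le hmM (sub_pos.mpr hu))

lemma rpowChord_pos (hm : 0 < m) (hmM : m < M) (hu : u ∈ Set.Ioo 0 1) (ht : 0 ≤ t) :
    0 < rpowChordSlope m M u * t + rpowChordIntercept m M u :=
  add_pos_of_nonneg_of_pos (mul_nonneg (rpowChordSlope_pos hm.le hmM hu.1).le ht)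
    (rpowChordIntercept_pos hm hmM hu.2)

lemma log_rpowChordIntercept (hm : 0 < m) (hmM : m < M) (hu : u < 1) :
    log (rpowChordIntercept m M u) = u * log (m * M) + log (rpowChordSlope m M (1 - u)) := by
  have hmM' : 0 < m * M := mul_pos hm (hm.trans hmM)
  rw [rpowChordIntercept_eq hm.le hmM, log_mul (rpow_pos_of_pos hmM' u).ne'
    (rpowChordSlope_pos hm.le hmM (sub_pos.mpr hu)).ne', log_rpow hmM']

lemma youngConst_mul_rpow_le {α β : ℝ} (hu : u ∈ Set.Ioo 0 1) (hα : 0 ≤ α) (hβ : 0 ≤ β)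
    (ht : 0 ≤ t) : youngConst α β u * t ^ u ≤ α * t + β := by
  have hu₀ := hu.1.ne'
  have hu₁ : 1 - u ≠ 0 := (sub_pos.mpr hu.2).ne'
  have hamgm := geom_mean_le_arith_mean2_weighted hu.1.le (sub_pos.mpr hu.2).le
    (div_nonneg (mul_nonneg hα ht) hu.1.le) (div_nonneg hβ (sub_pos.mpr hu.2).le) (by ring)
  calc youngConst α β u * t ^ u = (α * t / u) ^ u * (β / (1 - u)) ^ (1 - u) := by
        rw [youngConst, mul_div_right_comm, mul_rpow (div_nonneg hα hu.1.le) ht]; ring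
    _ ≤ u * (α * t / u) + (1 - u) * (β / (1 - u)) := hamgm
    _ = α * t + β := by field_simp

lemma youngConst_pos {α β : ℝ} (hu : u ∈ Set.Ioo 0 1) (hα : 0 < α) (hβ : 0 < β) :
    0 < youngConst α β u :=
  mul_pos (rpow_pos_of_pos (div_pos hα hu.1) _) (rpow_pos_of_pos (div_pos hβ (sub_pos.mpr hu.2)) _)

lemma log_youngConst {α β : ℝ} (hu : u ∈ Set.Ioo 0 1) (hα : 0 < α) (hβ : 0 < β) :
    log (youngConst α β u) = u * (log α - log u) + (1 - u) * (log β - log (1 - u)) := by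
  have hu₁ := sub_pos.mpr hu.2
  rw [youngConst, log_mul (rpow_pos_of_pos (div_pos hα hu.1) _).ne'
    (rpow_pos_of_pos (div_pos hβ hu₁) _).ne', log_rpow (div_pos hα hu.1),
    log_rpow (div_pos hβ hu₁), log_div hα.ne' hu.1.ne', log_div hβ.ne' hu₁.ne']

lemma youngConst_rpowChord_one_sub (hm : 0 < m) (hmM : m < M) (hu : u ∈ Set.Ioo 0 1) :
    youngConst (rpowChordSlope m M (1 - u)) (rpowChordIntercept m M (1 - u)) (1 - u) =
      youngConst (rpowChordSlope m M u) (rpowChordIntercept m M u) u := by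
  have hu' := one_sub_mem_Ioo_zero_one hu
  have hα := rpowChordSlope_pos hm.le hmM hu.1
  have hβ := rpowChordIntercept_pos hm hmM hu.2
  have hα' := rpowChordSlope_pos hm.le hmM hu'.1
  have hβ' := rpowChordIntercept_pos hm hmM hu'.2
  refine log_injOn_pos (youngConst_pos hu' hα' hβ') (youngConst_pos hu hα hβ) ?_
  rw [log_youngConst hu' hα' hβ', log_youngConst hu hα hβ, log_rpowChordIntercept hm hmM hu'.2,
    log_rpowChordIntercept hm hmM hu.2, sub_sub_cancel]
  ring

lemma inv_youngConst_rpowChord (hm : 0 < m) (hmM : m < M) (hs : s ∈ Set.Ioo 0 1) :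
    (youngConst (rpowChordSlope m M s) (rpowChordIntercept m M s) s)⁻¹ =
      s ^ s * (M - m) * (M * m ^ s - m * M ^ s) ^ (s - 1) /
        ((1 - s) ^ (s - 1) * (M ^ s - m ^ s) ^ s) := by
  have hα := rpowChordSlope_pos hm.le hmM hs.1
  have hβ := rpowChordIntercept_pos hm hmM hs.2
  have hc := youngConst_pos hs hα hβ
  have hMm : 0 < M - m := sub_pos.mpr hmM
  have hD : 0 < M ^ s - m ^ s := sub_pos.mpr (rpow_lt_rpow hm.le hmM hs.1)
  have hN : 0 < M * m ^ s - m * M ^ s := by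
    simpa [rpowChordIntercept, div_pos_iff, hMm, hMm.not_gt] using hβ
  have h1s : 0 < 1 - s := sub_pos.mpr hs.2
  have hnum : 0 < s ^ s * (M - m) * (M * m ^ s - m * M ^ s) ^ (s - 1) :=
    mul_pos (mul_pos (rpow_pos_of_pos hs.1 s) hMm) (rpow_pos_of_pos hN _)
  have hden : 0 < (1 - s) ^ (s - 1) * (M ^ s - m ^ s) ^ s :=
    mul_pos (rpow_pos_of_pos h1s _) (rpow_pos_of_pos hD _)
  refine (eq_inv_of_mul_eq_one_left (eq_one_of_pos_of_log_eq_zero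
    (mul_pos (div_pos hnum hden) hc) ?_)).symm
  rw [log_mul (div_pos hnum hden).ne' hc.ne', log_youngConst hs hα hβ,
    log_div hnum.ne' hden.ne', log_mul (mul_pos (rpow_pos_of_pos hs.1 s) hMm).ne'
      (rpow_pos_of_pos hN _).ne', log_mul (rpow_pos_of_pos hs.1 s).ne' hMm.ne',
    log_mul (rpow_pos_of_pos h1s _).ne' (rpow_pos_of_pos hD _).ne',
    log_rpow hs.1, log_rpow hN, log_rpow h1s, log_rpow hD, rpowChordSlope, rpowChordIntercept,
    log_div hD.ne' hMm.ne', log_div hN.ne' hMm.ne']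
  ring

lemma sqrt_le_inv_mul_sqrt {c α₁ β₁ α₂ β₂ : ℝ} (hc : 0 < c) (ht : 0 ≤ t)
    (h₁ : c * t ^ s ≤ α₁ * t + β₁) (h₂ : c * t ^ (1 - s) ≤ α₂ * t + β₂) :
    √t ≤ c⁻¹ * √((α₁ * t + β₁) * (α₂ * t + β₂)) := by
  have hsq : c ^ 2 * t ≤ (α₁ * t + β₁) * (α₂ * t + β₂) :=
    calc c ^ 2 * t = (c * t ^ s) * (c * t ^ (1 - s)) := by
          rw [mul_mul_mul_comm, ← rpow_add' ht (by norm_num), add_sub_cancel, rpow_one, sq]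
      _ ≤ _ := mul_le_mul h₁ h₂ (by positivity) ((by positivity : 0 ≤ c * t ^ s).trans h₁)
  rw [le_inv_mul_iff₀ hc, ← sqrt_sq hc.le, ← sqrt_mul (sq_nonneg c)]
  exact sqrt_le_sqrt hsq

lemma sqrt_le_inv_youngConst_mul_sqrt (hm : 0 < m) (hmM : m < M) (hs : s ∈ Set.Ioo 0 1)
    (ht : t ∈ Set.Icc m M) :
    √t ≤ (youngConst (rpowChordSlope m M s) (rpowChordIntercept m M s) s)⁻¹ *
      √((rpowChordSlope m M s * t + rpowChordIntercept m M s) *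
        (rpowChordSlope m M (1 - s) * t + rpowChordIntercept m M (1 - s))) := by
  have hs' := one_sub_mem_Ioo_zero_one hs
  have ht₀ : 0 ≤ t := hm.le.trans ht.1
  refine sqrt_le_inv_mul_sqrt (youngConst_pos hs (rpowChordSlope_pos hm.le hmM hs.1)
    (rpowChordIntercept_pos hm hmM hs.2)) ht₀ (youngConst_mul_rpow_le hs
      (rpowChordSlope_pos hm.le hmM hs.1).le (rpowChordIntercept_pos hm hmM hs.2).le ht₀) ?_
  rw [← youngConst_rpowChord_one_sub hm hmM hs]
  exact youngConst_mul_rpow_le hs' (rpowChordSlope_pos hm.le hmM hs'.1).le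
    (rpowChordIntercept_pos hm hmM hs'.2).le ht₀

end Scalar

open CFC Ring

section GeometricMean

variable {A B C U V X : H →L[ℂ] H}

lemma opRpow_eq_rpow (hA : 0 ≤ A) (r : ℝ) : opRpow A r = A ^ r :=
  (rpow_eq_cfc_real hA).symm

lemma rpow_neg_half_eq_sqrt_ringInverse (hA : IsStrictlyPositive A) :
    A ^ (-(1/2) : ℝ) = sqrt A⁻¹ʳ := by
  rw [inverse_eq_rpow_neg_one, sqrt_eq_rpow, rpow_rpow A _ _ (by norm_num)]
  norm_num

lemma conjSqrt_nonneg (hX : 0 ≤ X) : 0 ≤ conjSqrt C X :=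
  conjugate_nonneg_of_nonneg hX (sqrt_nonneg C)

lemma IsSelfAdjoint.conjSqrt (hX : IsSelfAdjoint X) : IsSelfAdjoint (conjSqrt C X) :=
  hX.conjugate_self (sqrt_nonneg C).isSelfAdjoint

lemma conjSqrt_self_ringInverse (hA : IsStrictlyPositive A) : conjSqrt A A⁻¹ʳ = 1 := by
  simpa [inverse_inverse hA.isUnit] using conjSqrt_ringInverse_self A⁻¹ʳ hA.ringInverse

lemma wgm_eq_conjSqrt (μ : ℝ) (hA : IsStrictlyPositive A) (hB : 0 ≤ B) :
    wgm μ A B = conjSqrt A (conjSqrt A⁻¹ʳ B ^ μ) := by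
  have hZ : 0 ≤ opRpow A (-(1/2)) * B * opRpow A (-(1/2)) :=
    conjugate_nonneg_of_nonneg hB (by rw [opRpow_eq_rpow hA.nonneg]; exact rpow_nonneg)
  rw [wgm, opRpow_eq_rpow hZ, opRpow_eq_rpow hA.nonneg, opRpow_eq_rpow hA.nonneg,
    ← sqrt_eq_rpow, rpow_neg_half_eq_sqrt_ringInverse hA, conjSqrt_apply, conjSqrt_apply]

lemma geomMean_eq_conjSqrt (hA : IsStrictlyPositive A) (hB : 0 ≤ B) :
    geomMean A B = conjSqrt A (sqrt (conjSqrt A⁻¹ʳ B)) := by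
  rw [geomMean, wgm_eq_conjSqrt _ hA hB, ← sqrt_eq_rpow]

lemma geomMean_zero_left (B : H →L[ℂ] H) : geomMean 0 B = 0 := by
  have h : opRpow (0 : H →L[ℂ] H) (1/2) = 0 := by
    rw [opRpow_eq_rpow le_rfl]
    exact zero_rpow (by norm_num)
  rw [geomMean, wgm, h, zero_mul, zero_mul]

lemma geomMean_nonneg (hA : IsStrictlyPositive A) (hB : 0 ≤ B) : 0 ≤ geomMean A B := by
  rw [geomMean_eq_conjSqrt hA hB]
  exact conjSqrt_nonneg (sqrt_nonneg _)

lemma IsStrictlyPositive.geomMean (hA : IsStrictlyPositive A) (hB : IsStrictlyPositive B) :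
    IsStrictlyPositive (geomMean A B) := by
  rw [geomMean_eq_conjSqrt hA hB.nonneg, isStrictlyPositive_conjSqrt_iff _ _ hA]
  exact IsStrictlyPositive.sqrt _
    ((isStrictlyPositive_conjSqrt_iff _ _ hA.ringInverse).mpr hB)

lemma geomMean_mul_ringInverse_mul_geomMean (hA : IsStrictlyPositive A) (hB : 0 ≤ B) :
    geomMean A B * A⁻¹ʳ * geomMean A B = B := by
  calc geomMean A B * A⁻¹ʳ * geomMean A B
      = sqrt A * (sqrt (conjSqrt A⁻¹ʳ B) * conjSqrt A A⁻¹ʳ * sqrt (conjSqrt A⁻¹ʳ B)) *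
          sqrt A := by
        simp only [geomMean_eq_conjSqrt hA hB, conjSqrt_apply, mul_assoc]
    _ = B := by
        rw [conjSqrt_self_ringInverse hA, mul_one, sqrt_mul_sqrt_self _ (conjSqrt_nonneg hB),
          ← conjSqrt_apply, conjSqrt_conjSqrt_ringInverse _ _ hA]

lemma eq_geomMean_of_mul_ringInverse_mul (hA : IsStrictlyPositive A) (hX : 0 ≤ X)
    (h : X * A⁻¹ʳ * X = B) : X = geomMean A B := by
  have hB : 0 ≤ B := h ▸ conjugate_nonneg_of_nonneg hA.ringInverse.nonneg hX
  have hsq : conjSqrt A⁻¹ʳ X * conjSqrt A⁻¹ʳ X = conjSqrt A⁻¹ʳ B := by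
    rw [← h]
    simp only [conjSqrt_apply, mul_assoc]
    rw [← mul_assoc (sqrt A⁻¹ʳ) (sqrt A⁻¹ʳ), sqrt_mul_sqrt_self _ hA.ringInverse.nonneg]
  rw [geomMean_eq_conjSqrt hA hB, sqrt_unique hsq (conjSqrt_nonneg hX),
    conjSqrt_conjSqrt_ringInverse _ _ hA]

lemma geomMean_comm (hA : IsStrictlyPositive A) (hB : IsStrictlyPositive B) :
    geomMean A B = geomMean B A := by
  have hG := hA.geomMean hB
  have hB_inv : B⁻¹ʳ = (geomMean A B)⁻¹ʳ * A * (geomMean A B)⁻¹ʳ := by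
    conv_lhs => rw [← geomMean_mul_ringInverse_mul_geomMean hA hB.nonneg]
    rw [Ring.inverse_mul (.inr hG.isUnit), Ring.inverse_mul (.inl hG.isUnit),
      inverse_inverse hA.isUnit, mul_assoc]
  refine eq_geomMean_of_mul_ringInverse_mul hB hG.nonneg ?_
  rw [hB_inv, ← mul_assoc, ← mul_assoc, mul_inverse_cancel _ hG.isUnit, one_mul,
    inverse_mul_cancel_right _ _ hG.isUnit]

lemma geomMean_le_geomMean_right {B₁ B₂ : H →L[ℂ] H} (hA : IsStrictlyPositive A)
    (hB₁ : 0 ≤ B₁) (h : B₁ ≤ B₂) : geomMean A B₁ ≤ geomMean A B₂ := by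
  rw [geomMean_eq_conjSqrt hA hB₁, geomMean_eq_conjSqrt hA (hB₁.trans h)]
  gcongr

lemma geomMean_le_geomMean {A₁ A₂ B₁ B₂ : H →L[ℂ] H} (hA₁ : IsStrictlyPositive A₁)
    (hB₁ : IsStrictlyPositive B₁) (hA : A₁ ≤ A₂) (hB : B₁ ≤ B₂) :
    geomMean A₁ B₁ ≤ geomMean A₂ B₂ := by
  have hA₂ := hA₁.of_le hA
  have hB₂ := hB₁.of_le hB
  calc geomMean A₁ B₁ ≤ geomMean A₁ B₂ := geomMean_le_geomMean_right hA₁ hB₁.nonneg hB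
    _ = geomMean B₂ A₁ := geomMean_comm hA₁ hB₂
    _ ≤ geomMean B₂ A₂ := geomMean_le_geomMean_right hB₂ hA₁.nonneg hA
    _ = geomMean A₂ B₂ := geomMean_comm hB₂ hA₂

lemma geomMean_conjSqrt (hC : IsStrictlyPositive C) (hU : IsStrictlyPositive U) (hV : 0 ≤ V) :
    geomMean (conjSqrt C U) (conjSqrt C V) = conjSqrt C (geomMean U V) := by
  have hsC := hC.isUnit_cfcSqrt
  symm
  refine eq_geomMean_of_mul_ringInverse_mul ((isStrictlyPositive_conjSqrt_iff _ _ hC).mpr hU)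
    (conjSqrt_nonneg (geomMean_nonneg hU hV)) ?_
  conv_rhs => rw [← geomMean_mul_ringInverse_mul_geomMean hU hV]
  rw [ringInverse_conjSqrt _ _ hC]
  simp only [conjSqrt_apply, sqrt_ringInverse, mul_assoc, mul_inverse_cancel_left _ _ hsC,
    inverse_mul_cancel_left _ _ hsC]

lemma geomMean_cfc {f g : ℝ → ℝ} (hX : IsSelfAdjoint X)
    (hf : ContinuousOn f (spectrum ℝ X)) (hg : ContinuousOn g (spectrum ℝ X))
    (hf_pos : ∀ x ∈ spectrum ℝ X, 0 < f x) (hg_nonneg : ∀ x ∈ spectrum ℝ X, 0 ≤ g x) :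
    geomMean (cfc f X) (cfc g X) = cfc (fun x => √(f x * g x)) X := by
  have hsqrt : ContinuousOn (fun x => √(f x * g x)) (spectrum ℝ X) :=
    Real.continuous_sqrt.comp_continuousOn (hf.mul hg)
  have hinv : ContinuousOn (fun x => (f x)⁻¹) (spectrum ℝ X) :=
    hf.inv₀ fun x hx => (hf_pos x hx).ne'
  symm
  refine eq_geomMean_of_mul_ringInverse_mul ((cfc_isStrictlyPositive_iff f X hf hX).mpr hf_pos)
    (cfc_nonneg fun _ _ => Real.sqrt_nonneg _) ?_
  rw [← cfc_inv f X (fun x hx => (hf_pos x hx).ne'), ← cfc_mul _ _ X hsqrt hinv,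
    ← cfc_mul (fun x => √(f x * g x) * (f x)⁻¹) _ X (hsqrt.mul hinv) hsqrt]
  refine cfc_congr fun x hx => ?_
  have hfx := (hf_pos x hx).ne'
  rw [mul_right_comm, Real.mul_self_sqrt (mul_nonneg (hf_pos x hx).le (hg_nonneg x hx))]
  field_simp

lemma spectrum_conjSqrt_ringInverse_subset_Icc {m M : ℝ} (hA : IsStrictlyPositive A)
    (h₁ : m • A ≤ B) (h₂ : B ≤ M • A) : spectrum ℝ (conjSqrt A⁻¹ʳ B) ⊆ Set.Icc m M := by
  have hB : IsSelfAdjoint B := by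
    simpa using (IsSelfAdjoint.of_nonneg (sub_nonneg.mpr h₁)).add
      ((IsSelfAdjoint.all m).smul hA.nonneg.isSelfAdjoint)
  have hlow := conjSqrt_le_conjSqrt (c := A⁻¹ʳ) h₁
  have hupp := conjSqrt_le_conjSqrt (c := A⁻¹ʳ) h₂
  rw [map_smul, conjSqrt_ringInverse_self _ hA, ← Algebra.algebraMap_eq_smul_one,
    algebraMap_le_iff_le_spectrum hB.conjSqrt] at hlow
  rw [map_smul, conjSqrt_ringInverse_self _ hA, ← Algebra.algebraMap_eq_smul_one,
    le_algebraMap_iff_spectrum_le hB.conjSqrt] at hupp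
  exact fun x hx => ⟨hlow x hx, hupp x hx⟩

lemma conjSqrt_cfc_affine (hA : IsStrictlyPositive A) (hB : IsSelfAdjoint B) (α β : ℝ) :
    conjSqrt A (cfc (fun t : ℝ => α * t + β) (conjSqrt A⁻¹ʳ B)) = α • B + β • A := by
  rw [cfc_add _ (fun t => α * t) (fun _ => β), cfc_const_mul_id α _ hB.conjSqrt,
    cfc_const β _ hB.conjSqrt, Algebra.algebraMap_eq_smul_one, map_add, map_smul, map_smul,
    conjSqrt_conjSqrt_ringInverse _ _ hA, conjSqrt_one _ hA.nonneg]

end GeometricMean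

section Inequalities

variable {A B P Q T S : H →L[ℂ] H} {m M s u : ℝ}

lemma smul_add_smul_le_wgm {α β : ℝ} (hm : 0 < m) (hA : IsStrictlyPositive A)
    (h₁ : m • A ≤ B) (h₂ : B ≤ M • A) (hchord : ∀ t ∈ Set.Icc m M, α * t + β ≤ t ^ u) :
    α • B + β • A ≤ wgm u A B := by
  have hB : 0 ≤ B := (smul_nonneg hm.le hA.nonneg).trans h₁
  have hspec := spectrum_conjSqrt_ringInverse_subset_Icc hA h₁ h₂
  rw [wgm_eq_conjSqrt u hA hB, ← conjSqrt_cfc_affine hA hB.isSelfAdjoint,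
    rpow_eq_cfc_real (conjSqrt_nonneg hB)]
  refine conjSqrt_le_conjSqrt (cfc_mono (fun x hx => hchord x (hspec hx)) ?_ ?_)
  · fun_prop
  · exact fun x hx => (Real.continuousAt_rpow_const x u
      (.inl (hm.trans_le (hspec hx).1).ne')).continuousWithinAt

lemma geomMean_le_smul_geomMean_affine {K α₁ β₁ α₂ β₂ : ℝ} (hm : 0 ≤ m)
    (hP : IsStrictlyPositive P) (h₁ : m • P ≤ Q) (h₂ : Q ≤ M • P)
    (hf : ∀ t ∈ Set.Icc m M, 0 < α₁ * t + β₁) (hg : ∀ t ∈ Set.Icc m M, 0 ≤ α₂ * t + β₂)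
    (h : ∀ t ∈ Set.Icc m M, √t ≤ K * √((α₁ * t + β₁) * (α₂ * t + β₂))) :
    geomMean P Q ≤ K • geomMean (α₁ • Q + β₁ • P) (α₂ • Q + β₂ • P) := by
  have hQ : 0 ≤ Q := (smul_nonneg hm hP.nonneg).trans h₁
  have hX : IsSelfAdjoint (conjSqrt P⁻¹ʳ Q) := hQ.isSelfAdjoint.conjSqrt
  have hspec := spectrum_conjSqrt_ringInverse_subset_Icc hP h₁ h₂
  have hfX : IsStrictlyPositive (cfc (fun t : ℝ => α₁ * t + β₁) (conjSqrt P⁻¹ʳ Q)) :=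
    (cfc_isStrictlyPositive_iff _ _).mpr fun t ht => hf t (hspec ht)
  calc geomMean P Q = conjSqrt P (cfc Real.sqrt (conjSqrt P⁻¹ʳ Q)) := by
        rw [geomMean_eq_conjSqrt hP hQ, sqrt_eq_real_sqrt _ (conjSqrt_nonneg hQ), cfcₙ_eq_cfc]
    _ ≤ conjSqrt P (cfc (fun t => K * √((α₁ * t + β₁) * (α₂ * t + β₂))) (conjSqrt P⁻¹ʳ Q)) :=
        conjSqrt_le_conjSqrt (cfc_mono fun t ht => h t (hspec ht))
    _ = K • conjSqrt P (geomMean (cfc (fun t : ℝ => α₁ * t + β₁) (conjSqrt P⁻¹ʳ Q))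
          (cfc (fun t : ℝ => α₂ * t + β₂) (conjSqrt P⁻¹ʳ Q))) := by
        rw [cfc_const_mul .., geomMean_cfc hX (by fun_prop) (by fun_prop)
          (fun t ht => hf t (hspec ht)) (fun t ht => hg t (hspec ht)), map_smul]
    _ = K • geomMean (α₁ • Q + β₁ • P) (α₂ • Q + β₂ • P) := by
        rw [← geomMean_conjSqrt hP hfX (cfc_nonneg fun t ht => hg t (hspec ht)),
          conjSqrt_cfc_affine hP hQ.isSelfAdjoint, conjSqrt_cfc_affine hP hQ.isSelfAdjoint]

lemma geomMean_le_smul_geomMean_of_rpowChord_le (hm : 0 < m) (hmM : m < M)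
    (hs : s ∈ Set.Ioo 0 1) (hP : IsStrictlyPositive P) (h₁ : m • P ≤ Q) (h₂ : Q ≤ M • P)
    (hT : rpowChordSlope m M s • Q + rpowChordIntercept m M s • P ≤ T)
    (hS : rpowChordSlope m M (1 - s) • Q + rpowChordIntercept m M (1 - s) • P ≤ S) :
    geomMean P Q ≤ (youngConst (rpowChordSlope m M s) (rpowChordIntercept m M s) s)⁻¹ •
      geomMean T S := by
  have hs' := one_sub_mem_Ioo_zero_one hs
  have hQ : 0 ≤ Q := (smul_nonneg hm.le hP.nonneg).trans h₁
  have hchord_pos : ∀ u ∈ Set.Ioo (0 : ℝ) 1,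
      IsStrictlyPositive (rpowChordSlope m M u • Q + rpowChordIntercept m M u • P) :=
    fun u hu => (hP.smul (rpowChordIntercept_pos hm hmM hu.2)).nonneg_add
      (smul_nonneg (rpowChordSlope_pos hm.le hmM hu.1).le hQ)
  have hc := youngConst_pos hs (rpowChordSlope_pos hm.le hmM hs.1)
    (rpowChordIntercept_pos hm hmM hs.2)
  calc geomMean P Q
      ≤ _ • geomMean (rpowChordSlope m M s • Q + rpowChordIntercept m M s • P)
          (rpowChordSlope m M (1 - s) • Q + rpowChordIntercept m M (1 - s) • P) :=
        geomMean_le_smul_geomMean_affine hm.le hP h₁ h₂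
          (fun t ht => rpowChord_pos hm hmM hs (hm.le.trans ht.1))
          (fun t ht => (rpowChord_pos hm hmM hs' (hm.le.trans ht.1)).le)
          (fun t ht => sqrt_le_inv_youngConst_mul_sqrt hm hmM hs ht)
    _ ≤ _ := smul_le_smul_of_nonneg_left (geomMean_le_geomMean (hchord_pos s hs)
          (hchord_pos _ hs') hT hS) (inv_nonneg.mpr hc.le)

lemma rpowChord_smul_sum_le_sum_wgm {ι : Type*} [Fintype ι] {A B : ι → H →L[ℂ] H}
    (hm : 0 < m) (hmM : m < M) (hu : u ∈ Set.Icc 0 1) (hA : ∀ j, IsStrictlyPositive (A j))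
    (h₁ : ∀ j, m • A j ≤ B j) (h₂ : ∀ j, B j ≤ M • A j) :
    rpowChordSlope m M u • ∑ j, B j + rpowChordIntercept m M u • ∑ j, A j ≤
      ∑ j, wgm u (A j) (B j) := by
  rw [Finset.smul_sum, Finset.smul_sum, ← Finset.sum_add_distrib]
  exact Finset.sum_le_sum fun j _ => smul_add_smul_le_wgm hm (hA j) (h₁ j) (h₂ j)
    fun t ht => rpowChord_le_rpow hm.le hmM hu ht

end Inequalities

lemma isStrictlyPositive_sum {ι 𝒜 : Type*} [Fintype ι] [Nonempty ι] [CStarAlgebra 𝒜]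
    [PartialOrder 𝒜] [StarOrderedRing 𝒜] {A : ι → 𝒜} (hA : ∀ j, IsStrictlyPositive (A j)) :
    IsStrictlyPositive (∑ j, A j) :=
  let j₀ := Classical.arbitrary ι
  (hA j₀).of_le (Finset.single_le_sum (fun j _ => (hA j).nonneg) (Finset.mem_univ j₀))

theorem reverse_callebaut_special_general
    (m M : ℝ) (hm : 0 < m) (hmM : m < M)
    (s : ℝ) (hs : s ∈ Set.Ioo (0 : ℝ) 1)
    (n : ℕ) (A B : Fin n → (H →L[ℂ] H))
    (hA : ∀ j, 0 ≤ A j) (hAu : ∀ j, IsUnit (A j))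
    (h1 : ∀ j, m • A j ≤ B j) (h2 : ∀ j, B j ≤ M • A j) :
    geomMean (∑ j, A j) (∑ j, B j) ≤
      (s ^ s * (M - m) * (M * m ^ s - m * M ^ s) ^ (s - 1) /
        ((1 - s) ^ (s - 1) * (M ^ s - m ^ s) ^ s)) •
        geomMean (∑ j, wgm s (A j) (B j)) (∑ j, wgm (1 - s) (A j) (B j)) := by
  rcases isEmpty_or_nonempty (Fin n) with hn | hn
  · simp [geomMean_zero_left]
  have hAj : ∀ j, IsStrictlyPositive (A j) := fun j => (hAu j).isStrictlyPositive (hA j)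
  have hPQ : m • ∑ j, A j ≤ ∑ j, B j := by
    rw [Finset.smul_sum]; exact Finset.sum_le_sum fun j _ => h1 j
  have hQP : ∑ j, B j ≤ M • ∑ j, A j := by
    rw [Finset.smul_sum]; exact Finset.sum_le_sum fun j _ => h2 j
  rw [← inv_youngConst_rpowChord hm hmM hs]
  exact geomMean_le_smul_geomMean_of_rpowChord_le hm hmM hs (isStrictlyPositive_sum hAj) hPQ hQP
    (rpowChord_smul_sum_le_sum_wgm hm hmM (Set.Ioo_subset_Icc_self hs) hAj h1 h2)
    (rpowChord_smul_sum_le_sum_wgm hm hmM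
      (Set.Ioo_subset_Icc_self (one_sub_mem_Ioo_zero_one hs)) hAj h1 h2)

/-- Reverse Callebaut inequality:
`(s^s (M−m)(Mm^s − mM^s)^{s−1} / ((1−s)^{s−1}(M^s − m^s)^s)) ·
  [(Σ A_j ♯_s B_j) ♯ (Σ A_j ♯_{1−s} B_j)] ≥ (Σ A_j) ♯ (Σ B_j)`
whenever `0 < mA_j ≤ B_j ≤ MA_j` and `s ∈ (0,1)`. -/
theorem reverse_callebaut_special
    (m M : ℝ) (hm : 0 < m) (hmM : m < M)
    (s : ℝ) (hs : s ∈ Set.Ioo (0 : ℝ) 1)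
    (n : ℕ) (A B : Fin n → (H →L[ℂ] H))
    (hA : ∀ j, 0 ≤ A j) (hAu : ∀ j, IsUnit (A j))
    (hB : ∀ j, 0 ≤ B j) (hBu : ∀ j, IsUnit (B j))
    (h1 : ∀ j, m • A j ≤ B j) (h2 : ∀ j, B j ≤ M • A j) :
    geomMean (∑ j, A j) (∑ j, B j) ≤
      (s ^ s * (M - m) * (M * m ^ s - m * M ^ s) ^ (s - 1) /
        ((1 - s) ^ (s - 1) * (M ^ s - m ^ s) ^ s)) •
        geomMean (∑ j, wgm s (A j) (B j)) (∑ j, wgm (1 - s) (A j) (B j)) :=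
  reverse_callebaut_special_general m M hm hmM s hs n A B hA hAu h1 h2
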